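/- The multivariate noncommutative Hall-Littlewood functions satisfy the product formula H_α · H_β = Σ_{γ ≼ β} (∏_{i ∈ D(β)∖D(γ)} (tᵢ - t_{|α|+i})) · (H_{αγ} + (1 - t_{|α|}) H_{α▷γ}). -/

import Mathlib

/-!
Index the compositions of `n` by their descent sets `S ⊆ {1, …, n - 1}` and write `h_S` for the
corresponding complete product. Möbius inversion on the Boolean lattice gives
`s_γ = Σ_{T ⊆ D(γ)} (-1)^{|D(γ) ∖ T|} h_T`, hence `H_γ = Σ_{T ⊆ D(γ)} ∏_{D(γ) ∖ T} (tᵢ - 1) h_T`;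
all sums here are "subset transforms" `Σ_{T ⊆ D} w^{D ∖ T} F(T)`, and composing the transforms
with weights `f` and `g` gives the one with weight `f + g` (binomial theorem).

Concatenation adds descents: `D(αγ) = D ∪ {|α|}` and `D(α ▷ γ) = D` for
`D = D(α) ∪ (|α| + D(γ))`, and `h_T h_U = h_{T ∪ {|α|} ∪ (|α| + U)}`. So in
`H_{αγ} + (1 - t_{|α|}) H_{α▷γ}` the terms without the descent `|α|` cancel, and what is left
factors as `Σ_{T, U} ∏ (tᵢ - 1) ∏ (t_{|α|+j} - 1) h_T h_U`. Summing against
`∏_{D(β) ∖ D(γ)} (tᵢ - t_{|α|+i})` recombines the weights into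
`(tᵢ - t_{|α|+i}) + (t_{|α|+i} - 1) = tᵢ - 1`, which is `H_α H_β`.
-/

noncomputable section

/-- Coefficient ring `ℚ[t₁, t₂, …]` (with `tᵢ = X i`). -/
abbrev R12 : Type := MvPolynomial ℕ ℚ

/-- `NSym[t₁, t₂, …]`, modeled as the free associative algebra over `ℚ[t₁,…]` on the
generators `h₁, h₂, …`. -/
abbrev NS : Type := FreeAlgebra R12 ℕ

/-- The generator `h_i`. -/
def hgen (i : ℕ) : NS := FreeAlgebra.ι R12 i

/-- `h_α = h_{α₁} ⋯ h_{α_ℓ}`. -/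
def hprod (α : List ℕ) : NS := (α.map hgen).prod

/-- The coarsening `β ≼ α` of `α` determined by a composition `c` of `ℓ(α)`. -/
def coarsen (α : List ℕ) (c : Composition α.length) : List ℕ :=
  (α.splitWrtComposition c).map List.sum

/-- The descent set `D(α)` of a composition, the set of proper nonzero partial sums. -/
def Dlist (α : List ℕ) : Finset ℕ :=
  Finset.image (fun j => (α.take j).sum) (Finset.Ioo 0 α.length)

/-- The noncommutative ribbon Schur function `s_α`. -/
def ribbon (α : List ℕ) : NS :=
  ∑ c : Composition α.length,
    ((-1 : R12) ^ (α.length - c.length)) • hprod (coarsen α c)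

/-- The multivariate noncommutative Hall-Littlewood function
`H_α = Σ_{β ≼ α} t^{D(α)∖D(β)} s_β`. -/
def HL (α : List ℕ) : NS :=
  ∑ c : Composition α.length,
    (∏ i ∈ Dlist α \ Dlist (coarsen α c), MvPolynomial.X i : R12) •
      ribbon (coarsen α c)

/-- The near-concatenation `α ▷ β`. -/
def nearConcat (α β : List ℕ) : List ℕ :=
  α.dropLast ++ (α.getLast! + β.headI) :: β.tail

open Finset MvPolynomial

theorem Composition.blocks_ne_nil {n : ℕ} (hn : 0 < n) (c : Composition n) : c.blocks ≠ [] := by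
  intro h
  have := c.blocks_sum
  simp [h] at this
  omega

namespace NSymHL

section PowersetSum

variable {ι κ R M : Type*} [DecidableEq ι] [DecidableEq κ] [CommSemiring R] [AddCommMonoid M]
  [Module R M]

def powersetSum (D : Finset ι) (w : ι → R) (F : Finset ι → M) : M :=
  ∑ T ∈ D.powerset, (∏ i ∈ D \ T, w i) • F T

@[simp]
lemma powersetSum_empty (w : ι → R) (F : Finset ι → M) : powersetSum ∅ w F = F ∅ := by
  simp [powersetSum]

lemma powersetSum_congr {D : Finset ι} {w : ι → R} {F G : Finset ι → M}
    (h : ∀ T ⊆ D, F T = G T) : powersetSum D w F = powersetSum D w G :=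
  sum_congr rfl fun T hT => by rw [h T (mem_powerset.1 hT)]

lemma powersetSum_add (D : Finset ι) (w : ι → R) (F G : Finset ι → M) :
    powersetSum D w (fun T => F T + G T) = powersetSum D w F + powersetSum D w G := by
  simp only [powersetSum, smul_add, sum_add_distrib]

lemma powersetSum_smul (D : Finset ι) (w : ι → R) (r : R) (F : Finset ι → M) :
    powersetSum D w (fun T => r • F T) = r • powersetSum D w F := by
  simp only [powersetSum, smul_sum, smul_comm r]

lemma powersetSum_comm (D E : Finset ι) (v w : ι → R) (F : Finset ι → Finset ι → M) :
    powersetSum D v (fun T => powersetSum E w (F T))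
      = powersetSum E w (fun U => powersetSum D v (fun T => F T U)) := by
  simp only [powersetSum, smul_sum]
  rw [sum_comm]
  exact sum_congr rfl fun _ _ => sum_congr rfl fun _ _ => smul_comm _ _ _

lemma powersetSum_insert {a : ι} {D : Finset ι} (ha : a ∉ D) (w : ι → R) (F : Finset ι → M) :
    powersetSum (insert a D) w F
      = powersetSum D w (fun T => F (insert a T)) + w a • powersetSum D w F := by
  rw [powersetSum, sum_powerset_insert ha, add_comm, powersetSum, powersetSum, smul_sum]
  congr 1
  · refine sum_congr rfl fun T _ => ?_
    rw [insert_sdiff_insert, sdiff_insert_of_notMem ha]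
  · refine sum_congr rfl fun T hT => ?_
    have haT : a ∉ T := fun h => ha (mem_powerset.1 hT h)
    rw [insert_sdiff_of_notMem _ haT, prod_insert fun h => ha (mem_sdiff.1 h).1, mul_smul]

lemma powersetSum_union {D E : Finset ι} (hDE : Disjoint D E) (w : ι → R)
    (F : Finset ι → M) :
    powersetSum (D ∪ E) w F
      = powersetSum D w (fun T => powersetSum E w (fun U => F (T ∪ U))) := by
  induction D using Finset.induction_on generalizing F with
  | empty => simp
  | insert a D ha ih =>
    have hD : Disjoint D E := disjoint_of_subset_left (subset_insert a D) hDE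
    have haE : a ∉ D ∪ E := by
      simpa [ha] using disjoint_left.1 hDE (mem_insert_self a D)
    simp only [insert_union, powersetSum_insert haE, powersetSum_insert ha, ih hD]

lemma powersetSum_image {φ : ι → κ} (hφ : Function.Injective φ) (D : Finset ι) (w : κ → R)
    (F : Finset κ → M) :
    powersetSum (D.image φ) w F = powersetSum D (fun i => w (φ i)) (fun T => F (T.image φ)) := by
  induction D using Finset.induction_on generalizing F with
  | empty => simp
  | insert a D ha ih =>
    have hφa : φ a ∉ D.image φ := by rwa [hφ.mem_finset_image]
    simp only [image_insert, powersetSum_insert hφa, powersetSum_insert ha, ih]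

lemma powersetSum_powersetSum (D : Finset ι) (f g : ι → R) (F : Finset ι → M) :
    powersetSum D f (fun S => powersetSum S g F) = powersetSum D (fun i => f i + g i) F := by
  induction D using Finset.induction_on generalizing F with
  | empty => simp
  | insert a D ha ih =>
    rw [powersetSum_insert ha, powersetSum_insert ha,
      powersetSum_congr fun S hS => powersetSum_insert (fun h => ha (hS h)) g F,
      powersetSum_add, powersetSum_smul, ih, ih, add_smul, add_assoc, add_comm (g a • _)]

lemma powersetSum_mul_powersetSum {A : Type*} [Semiring A] [Algebra R A] (D E : Finset ι)
    (v w : ι → R) (F G : Finset ι → A) :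
    powersetSum D v F * powersetSum E w G
      = powersetSum D v (fun T => powersetSum E w (fun U => F T * G U)) := by
  simp only [powersetSum, sum_mul, mul_sum, smul_mul_smul_comm, smul_sum, smul_smul]
  exact sum_comm

end PowersetSum

lemma sum_take_lt_sum_take {l : List ℕ} (hl : ∀ x ∈ l, 0 < x) {i j : ℕ} (hij : i < j)
    (hj : j ≤ l.length) : (l.take i).sum < (l.take j).sum := by
  induction j with
  | zero => omega
  | succ k ih =>
    have hk : k < l.length := by omega
    have := hl _ (List.getElem_mem hk)
    rw [List.sum_take_succ _ _ hk]
    rcases Nat.lt_or_ge i k with h | h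
    · exact (ih h hk.le).trans (Nat.lt_add_of_pos_right this)
    · obtain rfl : i = k := by omega
      omega

lemma mem_Dlist {l : List ℕ} {x : ℕ} :
    x ∈ Dlist l ↔ ∃ j, 0 < j ∧ j < l.length ∧ (l.take j).sum = x := by
  simp [Dlist, and_assoc]

lemma Dlist_subset_Ioo {l : List ℕ} (hl : ∀ x ∈ l, 0 < x) : Dlist l ⊆ Ioo 0 l.sum := by
  intro x hx
  obtain ⟨j, hj0, hj, rfl⟩ := mem_Dlist.1 hx
  have h1 := sum_take_lt_sum_take hl hj0 hj.le
  have h2 := sum_take_lt_sum_take hl hj le_rfl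
  rw [List.take_zero, List.sum_nil] at h1
  rw [List.take_length] at h2
  exact mem_Ioo.2 ⟨h1, h2⟩

lemma sum_notMem_Dlist {l : List ℕ} (hl : ∀ x ∈ l, 0 < x) : l.sum ∉ Dlist l :=
  fun h => (mem_Ioo.1 (Dlist_subset_Ioo hl h)).2.false

lemma injOn_sum_take {l : List ℕ} (hl : ∀ x ∈ l, 0 < x) :
    Set.InjOn (fun j => (l.take j).sum) (Ioo 0 l.length) := by
  intro i hi j hj hij
  simp only [coe_Ioo, Set.mem_Ioo] at hi hj
  by_contra hne
  rcases Nat.lt_or_gt_of_ne hne with h | h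
  · exact (sum_take_lt_sum_take hl h hj.2.le).ne hij
  · exact (sum_take_lt_sum_take hl h hi.2.le).ne' hij

lemma length_eq_card_Dlist_add_one {l : List ℕ} (hl : ∀ x ∈ l, 0 < x) (h0 : l ≠ []) :
    l.length = #(Dlist l) + 1 := by
  have := List.length_pos_iff.2 h0
  rw [Dlist, card_image_of_injOn (injOn_sum_take hl), Nat.card_Ioo]
  omega

@[simp]
lemma Dlist_singleton (x : ℕ) : Dlist [x] = ∅ := by
  simp [Dlist, show Ioo 0 1 = (∅ : Finset ℕ) by rfl]

lemma Dlist_cons {x : ℕ} {l : List ℕ} (hl : l ≠ []) :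
    Dlist (x :: l) = insert x ((Dlist l).image (x + ·)) := by
  ext y
  simp only [mem_Dlist, mem_insert, mem_image]
  constructor
  · rintro ⟨_ | _ | k, hj0, hj, rfl⟩
    · omega
    · simp
    · exact Or.inr ⟨_, ⟨k + 1, k.succ_pos, by simpa using hj, rfl⟩, by simp⟩
  · rintro (rfl | ⟨z, ⟨k, hk0, hk, rfl⟩, rfl⟩)
    · exact ⟨1, one_pos, by simpa using List.length_pos_iff.2 hl, by simp⟩
    · exact ⟨k + 1, by omega, by simpa using hk, by simp⟩

lemma Dlist_append {γ δ : List ℕ} (hγ : γ ≠ []) (hδ : δ ≠ []) :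
    Dlist (γ ++ δ) = Dlist γ ∪ insert γ.sum ((Dlist δ).image (γ.sum + ·)) := by
  induction γ with
  | nil => exact absurd rfl hγ
  | cons x γ ih =>
    rcases eq_or_ne γ [] with rfl | hγ'
    · simp [Dlist_cons hδ]
    · rw [List.cons_append, Dlist_cons (by simp [hγ']), ih hγ', Dlist_cons hγ',
        image_union, image_insert, image_image, List.sum_cons]
      simp only [Function.comp_def, add_assoc, insert_union]

lemma Dlist_append_singleton {γ : List ℕ} (hγ : γ ≠ []) (x : ℕ) :
    Dlist (γ ++ [x]) = insert γ.sum (Dlist γ) := by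
  rw [Dlist_append hγ (List.cons_ne_nil x []), Dlist_singleton, image_empty, union_insert,
    union_empty]

def diffsFrom : ℕ → List ℕ → List ℕ
  | _, [] => []
  | a, b :: l => (b - a) :: diffsFrom b l

lemma diffsFrom_append_singleton (a m n : ℕ) :
    ∀ L : List ℕ, diffsFrom a (L ++ [m] ++ [n]) = diffsFrom a (L ++ [m]) ++ [n - m]
  | [] => rfl
  | x :: L => by
    simp only [List.cons_append, diffsFrom]
    rw [diffsFrom_append_singleton x m n L]

/-- The composition of `n` with descent set `S ⊆ Ioo 0 n`: the gaps between consecutive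
elements of `S ∪ {0, n}`. -/
def ofDescents (n : ℕ) (S : Finset ℕ) : List ℕ :=
  diffsFrom 0 ((insert n S).sort (· ≤ ·))

lemma sort_insert_of_forall_lt {α : Type*} [LinearOrder α] {s : Finset α} {b : α}
    (hb : ∀ x ∈ s, x < b) :
    (insert b s).sort (· ≤ ·) = s.sort (· ≤ ·) ++ [b] := by
  refine List.Perm.eq_of_pairwise' (pairwise_sort _ _) ?_ ?_
  · simp only [List.pairwise_append, pairwise_sort, List.pairwise_singleton, mem_sort,
      List.mem_singleton, true_and]
    rintro a ha _ rfl
    exact (hb a ha).le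
  · rw [List.perm_ext_iff_of_nodup (sort_nodup _ _)
      ((sort_nodup s _).append (List.nodup_singleton b) ?_)]
    · intro x
      simp [or_comm]
    · simpa using fun h => (hb b h).false

@[simp]
lemma ofDescents_empty (n : ℕ) : ofDescents n ∅ = [n] := by
  simp [ofDescents, diffsFrom]

lemma ofDescents_ne_nil (n : ℕ) (S : Finset ℕ) : ofDescents n S ≠ [] := by
  have hn : n ∈ (insert n S).sort (· ≤ ·) := (mem_sort _).2 (mem_insert_self n S)
  rw [ofDescents]
  cases h : (insert n S).sort (· ≤ ·) with
  | nil => simp [h] at hn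
  | cons b l => simp [diffsFrom]

lemma ofDescents_eq_append {n m : ℕ} {S : Finset ℕ} (hmS : m ∈ S) (hmax : ∀ x ∈ S, x ≤ m)
    (hn : ∀ x ∈ S, x < n) : ofDescents n S = ofDescents m (S.erase m) ++ [n - m] := by
  have herase : ∀ x ∈ S.erase m, x < m := fun x hx =>
    (hmax x (mem_of_mem_erase hx)).lt_of_ne (ne_of_mem_erase hx)
  have hS : S.sort (· ≤ ·) = (S.erase m).sort (· ≤ ·) ++ [m] := by
    conv_lhs => rw [← insert_erase hmS]
    exact sort_insert_of_forall_lt herase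
  rw [ofDescents, ofDescents, sort_insert_of_forall_lt hn, hS, sort_insert_of_forall_lt herase,
    diffsFrom_append_singleton]

lemma ofDescents_spec (S : Finset ℕ) {n : ℕ} (hn : 0 < n) (hS : S ⊆ Ioo 0 n) :
    (∀ x ∈ ofDescents n S, 0 < x) ∧ (ofDescents n S).sum = n ∧ Dlist (ofDescents n S) = S := by
  induction S using Finset.strongInduction generalizing n with
  | _ S ih =>
    rcases S.eq_empty_or_nonempty with rfl | hSne
    · simpa using hn
    set m := S.max' hSne
    have hmS : m ∈ S := S.max'_mem hSne
    have hmax : ∀ x ∈ S, x ≤ m := fun x hx => S.le_max' x hx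
    have hm := mem_Ioo.1 (hS hmS)
    have hsub : S.erase m ⊆ Ioo 0 m := fun x hx => mem_Ioo.2
      ⟨(mem_Ioo.1 (hS (mem_of_mem_erase hx))).1,
        (hmax x (mem_of_mem_erase hx)).lt_of_ne (ne_of_mem_erase hx)⟩
    obtain ⟨hpos, hsum, hD⟩ := ih (S.erase m) (erase_ssubset hmS) hm.1 hsub
    rw [ofDescents_eq_append hmS hmax fun x hx => (mem_Ioo.1 (hS hx)).2]
    refine ⟨?_, by simp [hsum]; omega, ?_⟩
    · simp only [List.mem_append, List.mem_singleton]
      rintro x (hx | rfl)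
      exacts [hpos x hx, by omega]
    · rw [Dlist_append_singleton (ofDescents_ne_nil _ _), hsum, hD, insert_erase hmS]

lemma ofDescents_sum_Dlist {l : List ℕ} (hl : ∀ x ∈ l, 0 < x) (h0 : l ≠ []) :
    ofDescents l.sum (Dlist l) = l := by
  induction l using List.reverseRecOn with
  | nil => exact absurd rfl h0
  | append_singleton γ x ih =>
    rcases eq_or_ne γ [] with rfl | hγ
    · simp
    have hγpos : ∀ y ∈ γ, 0 < y := fun y hy => hl y (by simp [hy])
    have hx : 0 < x := hl x (by simp)
    have hmax : ∀ y ∈ insert γ.sum (Dlist γ), y ≤ γ.sum := by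
      simp only [mem_insert, forall_eq_or_imp, le_refl, true_and]
      exact fun y hy => (mem_Ioo.1 (Dlist_subset_Ioo hγpos hy)).2.le
    rw [Dlist_append_singleton hγ, ofDescents_eq_append (mem_insert_self _ _) hmax
      fun y hy => by simp only [List.sum_append, List.sum_singleton]; linarith [hmax y hy],
      erase_insert (sum_notMem_Dlist hγpos), ih hγpos hγ]
    simp

lemma ofDescents_spec_of_subset {l : List ℕ} (hl : ∀ x ∈ l, 0 < x) (h0 : l ≠ [])
    {S : Finset ℕ} (hS : S ⊆ Dlist l) :
    (∀ x ∈ ofDescents l.sum S, 0 < x) ∧ (ofDescents l.sum S).sum = l.sum ∧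
      Dlist (ofDescents l.sum S) = S :=
  ofDescents_spec S (List.sum_pos l hl h0) (hS.trans (Dlist_subset_Ioo hl))

lemma ofDescents_append {a c : ℕ} (ha : 0 < a) (hc : 0 < c) {T U : Finset ℕ}
    (hT : T ⊆ Ioo 0 a) (hU : U ⊆ Ioo 0 c) :
    ofDescents (a + c) (insert a (T ∪ U.image (a + ·))) = ofDescents a T ++ ofDescents c U := by
  obtain ⟨hTpos, hTsum, hTD⟩ := ofDescents_spec T ha hT
  obtain ⟨hUpos, hUsum, hUD⟩ := ofDescents_spec U hc hU
  have hl := ofDescents_sum_Dlist (List.forall_mem_append.2 ⟨hTpos, hUpos⟩)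
    (by simp [ofDescents_ne_nil])
  rwa [Dlist_append (ofDescents_ne_nil _ _) (ofDescents_ne_nil _ _), List.sum_append, hTsum,
    hUsum, hTD, hUD, union_insert] at hl

section Coarsening

variable {M : Type*} [AddCommMonoid M]

/-- A composition of `n > 0` is determined by its descent set (`ofDescents_sum_Dlist`), and
every subset of `Ioo 0 n` is one (`ofDescents_spec`). -/
lemma sum_composition_eq_sum_powerset {n : ℕ} (hn : 0 < n) (g : Finset ℕ → M) :
    ∑ c : Composition n, g (Dlist c.blocks) = ∑ I ∈ (Ioo 0 n).powerset, g I := by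
  refine sum_bij (fun c _ => Dlist c.blocks) (fun c _ => ?_) (fun c₁ _ c₂ _ h => ?_)
    (fun I hI => ?_) fun _ _ => rfl
  · have := Dlist_subset_Ioo fun _ => c.blocks_pos
    rw [c.blocks_sum] at this
    exact mem_powerset.2 this
  · refine Composition.ext ?_
    rw [← ofDescents_sum_Dlist (fun _ => c₁.blocks_pos) (Composition.blocks_ne_nil hn c₁),
      ← ofDescents_sum_Dlist (fun _ => c₂.blocks_pos) (Composition.blocks_ne_nil hn c₂),
      c₁.blocks_sum, c₂.blocks_sum, h]
  · obtain ⟨hpos, hsum, hD⟩ := ofDescents_spec I hn (mem_powerset.1 hI)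
    exact ⟨⟨ofDescents n I, hpos _, hsum⟩, mem_univ _, hD⟩

variable {α : List ℕ}

lemma coarsen_sum (c : Composition α.length) : (coarsen α c).sum = α.sum := by
  rw [coarsen, ← List.sum_flatten, List.flatten_splitWrtComposition]

lemma coarsen_length (c : Composition α.length) : (coarsen α c).length = c.length := by
  rw [coarsen, List.length_map, List.length_splitWrtComposition]

lemma coarsen_pos (hα : ∀ x ∈ α, 0 < x) (c : Composition α.length) :
    ∀ x ∈ coarsen α c, 0 < x := by
  simp only [coarsen, List.mem_map]
  rintro _ ⟨chunk, hchunk, rfl⟩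
  have hlen : chunk.length ∈ c.blocks := by
    rw [← List.map_length_splitWrtComposition α c]
    exact List.mem_map_of_mem hchunk
  obtain ⟨y, hy⟩ := List.exists_mem_of_length_pos (c.blocks_pos hlen)
  have hyα : y ∈ α := by
    rw [← List.flatten_splitWrtComposition α c]
    exact List.mem_flatten.2 ⟨chunk, hchunk, hy⟩
  exact (hα y hyα).trans_le (List.le_sum_of_mem hy)

lemma coarsen_ne_nil (hα : ∀ x ∈ α, 0 < x) (hα0 : α ≠ []) (c : Composition α.length) :
    coarsen α c ≠ [] := by
  intro h
  have := coarsen_sum c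
  rw [h, List.sum_nil] at this
  exact (List.sum_pos α hα hα0).ne this

lemma sum_take_coarsen (c : Composition α.length) (j : ℕ) :
    ((coarsen α c).take j).sum = (α.take (c.sizeUpTo j)).sum := by
  rw [coarsen, ← List.map_take, ← List.sum_flatten]
  congr 1
  have := List.take_sum_flatten (α.splitWrtComposition c) j
  rw [List.map_length_splitWrtComposition, List.flatten_splitWrtComposition] at this
  exact this.symm

lemma Dlist_coarsen (c : Composition α.length) :
    Dlist (coarsen α c) = (Dlist c.blocks).image fun j => (α.take j).sum := by
  rw [Dlist, Dlist, image_image, coarsen_length]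
  exact image_congr fun j _ => sum_take_coarsen c j

lemma sum_coarsen_eq_sum_powerset (hα : ∀ x ∈ α, 0 < x) (hα0 : α ≠ []) (f : List ℕ → M) :
    ∑ c : Composition α.length, f (coarsen α c)
      = ∑ S ∈ (Dlist α).powerset, f (ofDescents α.sum S) := by
  have hcoarsen : ∀ c : Composition α.length,
      coarsen α c = ofDescents α.sum ((Dlist c.blocks).image fun j => (α.take j).sum) := by
    intro c
    rw [← Dlist_coarsen, ← coarsen_sum c,
      ofDescents_sum_Dlist (coarsen_pos hα c) (coarsen_ne_nil hα hα0 c)]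
  simp only [hcoarsen]
  rw [sum_composition_eq_sum_powerset (List.length_pos_iff.2 hα0)
      fun I => f (ofDescents α.sum (I.image fun j => (α.take j).sum)),
    Dlist, powerset_image, sum_image (image_injOn_powerset_of_injOn (injOn_sum_take hα))]

end Coarsening

lemma Dlist_append_singleton_eq (γ : List ℕ) (u v : ℕ) :
    Dlist (γ ++ [u]) = Dlist (γ ++ [v]) := by
  rcases eq_or_ne γ [] with rfl | hγ
  · simp
  · rw [Dlist_append_singleton hγ, Dlist_append_singleton hγ]

lemma nearConcat_append_cons (γ δ : List ℕ) (x y : ℕ) :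
    nearConcat (γ ++ [x]) (y :: δ) = γ ++ [x + y] ++ δ := by
  rw [nearConcat, List.dropLast_concat, List.getLast!_of_getLast? List.getLast?_concat]
  simp

lemma Dlist_nearConcat_append_cons (γ δ : List ℕ) (x y : ℕ) :
    Dlist (nearConcat (γ ++ [x]) (y :: δ))
      = Dlist (γ ++ [x]) ∪ (Dlist (y :: δ)).image ((γ ++ [x]).sum + ·) := by
  rw [nearConcat_append_cons, Dlist_append_singleton_eq γ x (x + y)]
  rcases eq_or_ne δ [] with rfl | hδ
  · simp
  · rw [Dlist_append (by simp) hδ, Dlist_cons hδ, image_insert, image_image]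
    simp only [List.sum_append, List.sum_singleton, Function.comp_def, add_assoc]

lemma nearConcat_ne_nil (γ δ : List ℕ) : nearConcat γ δ ≠ [] := by
  simp [nearConcat]

lemma nearConcat_spec {γ δ : List ℕ} (hγ : ∀ x ∈ γ, 0 < x) (hγ0 : γ ≠ [])
    (hδ : ∀ x ∈ δ, 0 < x) (hδ0 : δ ≠ []) :
    (∀ x ∈ nearConcat γ δ, 0 < x) ∧ (nearConcat γ δ).sum = γ.sum + δ.sum ∧
      Dlist (nearConcat γ δ) = Dlist γ ∪ (Dlist δ).image (γ.sum + ·) := by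
  obtain ⟨γ, x, rfl⟩ := (List.eq_nil_or_concat γ).resolve_left hγ0
  obtain ⟨y, δ, rfl⟩ := List.exists_cons_of_ne_nil hδ0
  simp only [List.concat_eq_append] at hγ ⊢
  refine ⟨?_, ?_, Dlist_nearConcat_append_cons γ δ x y⟩
  · rw [nearConcat_append_cons]
    have := hγ x (by simp)
    simp only [List.mem_append, List.mem_singleton]
    rintro z ((hz | rfl) | hz)
    · exact hγ z (List.mem_append_left _ hz)
    · omega
    · exact hδ z (List.mem_cons_of_mem y hz)
  · simp only [nearConcat_append_cons, List.sum_append, List.sum_cons]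
    omega

lemma hprod_append (γ δ : List ℕ) : hprod (γ ++ δ) = hprod γ * hprod δ := by
  rw [hprod, hprod, hprod, List.map_append, List.prod_append]

lemma ribbon_eq_powersetSum {γ : List ℕ} (hγ : ∀ x ∈ γ, 0 < x) (hγ0 : γ ≠ []) :
    ribbon γ = powersetSum (Dlist γ) (fun _ => (-1 : R12)) fun T => hprod (ofDescents γ.sum T) := by
  rw [ribbon, sum_congr rfl fun c _ => by rw [← coarsen_length c],
    sum_coarsen_eq_sum_powerset hγ hγ0 fun δ => (-1 : R12) ^ (γ.length - δ.length) • hprod δ]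
  refine sum_congr rfl fun T hT => ?_
  have hTD := mem_powerset.1 hT
  obtain ⟨hpos, -, hD⟩ := ofDescents_spec_of_subset hγ hγ0 hTD
  rw [prod_const, card_sdiff_of_subset hTD, length_eq_card_Dlist_add_one hγ hγ0,
    length_eq_card_Dlist_add_one hpos (ofDescents_ne_nil _ _), hD, Nat.add_sub_add_right]

lemma HL_eq_powersetSum {γ : List ℕ} (hγ : ∀ x ∈ γ, 0 < x) (hγ0 : γ ≠ []) :
    HL γ = powersetSum (Dlist γ) (fun i => (X i : R12) - 1)
      fun T => hprod (ofDescents γ.sum T) := by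
  have hribbon : ∀ S ⊆ Dlist γ, ribbon (ofDescents γ.sum S)
      = powersetSum S (fun _ => (-1 : R12)) fun T => hprod (ofDescents γ.sum T) := by
    intro S hS
    obtain ⟨hpos, hsum, hD⟩ := ofDescents_spec_of_subset hγ hγ0 hS
    rw [ribbon_eq_powersetSum hpos (ofDescents_ne_nil _ _), hsum, hD]
  calc HL γ = powersetSum (Dlist γ) X fun S => ribbon (ofDescents γ.sum S) := by
        rw [HL, sum_coarsen_eq_sum_powerset hγ hγ0
          fun δ => (∏ i ∈ Dlist γ \ Dlist δ, X i : R12) • ribbon δ]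
        refine sum_congr rfl fun S hS => ?_
        rw [(ofDescents_spec_of_subset hγ hγ0 (mem_powerset.1 hS)).2.2]
    _ = _ := by
        rw [powersetSum_congr hribbon, powersetSum_powersetSum]
        simp only [sub_eq_add_neg]

lemma HL_append_add_nearConcat {α γ : List ℕ} (hα : ∀ x ∈ α, 0 < x) (hα0 : α ≠ [])
    (hγ : ∀ x ∈ γ, 0 < x) (hγ0 : γ ≠ []) :
    HL (α ++ γ) + (1 - X α.sum : R12) • HL (nearConcat α γ)
      = powersetSum (Dlist α) (fun i => (X i : R12) - 1) fun T =>
          powersetSum (Dlist γ) (fun j => (X (α.sum + j) : R12) - 1) fun U =>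
            hprod (ofDescents α.sum T) * hprod (ofDescents γ.sum U) := by
  obtain ⟨hNpos, hNsum, hND⟩ := nearConcat_spec hα hα0 hγ hγ0
  have happ : ∀ x ∈ α ++ γ, 0 < x := List.forall_mem_append.2 ⟨hα, hγ⟩
  have hdisj : Disjoint (Dlist α) ((Dlist γ).image (α.sum + ·)) := by
    refine disjoint_left.2 fun z hz hz' => ?_
    obtain ⟨u, -, rfl⟩ := mem_image.1 hz'
    have := (mem_Ioo.1 (Dlist_subset_Ioo hα hz)).2
    omega
  have ha : α.sum ∉ Dlist α ∪ (Dlist γ).image (α.sum + ·) := by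
    simp only [mem_union, mem_image, not_or, not_exists, not_and]
    exact ⟨sum_notMem_Dlist hα, fun u hu h => (mem_Ioo.1 (Dlist_subset_Ioo hγ hu)).1.ne' (by omega)⟩
  rw [HL_eq_powersetSum happ (by simp [hα0]), HL_eq_powersetSum hNpos (nearConcat_ne_nil α γ),
    Dlist_append hα0 hγ0, union_insert, hND, hNsum, List.sum_append, powersetSum_insert ha,
    add_assoc, ← add_smul, sub_add_sub_cancel', sub_self, zero_smul, add_zero,
    powersetSum_union hdisj]
  refine powersetSum_congr fun T hT => ?_
  rw [powersetSum_image (add_right_injective α.sum)]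
  refine powersetSum_congr fun U hU => ?_
  rw [ofDescents_append (List.sum_pos α hα hα0) (List.sum_pos γ hγ hγ0)
    (hT.trans (Dlist_subset_Ioo hα)) (hU.trans (Dlist_subset_Ioo hγ)), hprod_append]

end NSymHL

open NSymHL

/-- Product formula:
`H_α · H_β = Σ_{γ ≼ β} (∏_{i ∈ D(β)∖D(γ)} (tᵢ - t_{|α|+i})) (H_{αγ} + (1 - t_{|α|}) H_{α▷γ})`. -/
theorem stmt_12 (α β : List ℕ) (hα : ∀ x ∈ α, 0 < x) (hβ : ∀ x ∈ β, 0 < x)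
    (hα0 : α ≠ []) (hβ0 : β ≠ []) :
    HL α * HL β =
      ∑ c : Composition β.length,
        (∏ i ∈ Dlist β \ Dlist (coarsen β c),
            (MvPolynomial.X i - MvPolynomial.X (α.sum + i)) : R12) •
          (HL (α ++ coarsen β c) +
            (1 - (MvPolynomial.X α.sum : R12)) • HL (nearConcat α (coarsen β c))) := by
  rw [sum_coarsen_eq_sum_powerset hβ hβ0 fun γ =>
    (∏ i ∈ Dlist β \ Dlist γ, (X i - X (α.sum + i)) : R12) •
      (HL (α ++ γ) + (1 - X α.sum : R12) • HL (nearConcat α γ))]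
  calc HL α * HL β
      = powersetSum (Dlist α) (fun i => (X i : R12) - 1) fun T =>
          powersetSum (Dlist β) (fun i => (X i - X (α.sum + i) : R12) + (X (α.sum + i) - 1))
            fun U => hprod (ofDescents α.sum T) * hprod (ofDescents β.sum U) := by
        rw [HL_eq_powersetSum hα hα0, HL_eq_powersetSum hβ hβ0, powersetSum_mul_powersetSum]
        simp only [sub_add_sub_cancel]
    _ = powersetSum (Dlist β) (fun i => (X i - X (α.sum + i) : R12)) fun S =>
          powersetSum (Dlist α) (fun i => (X i : R12) - 1) fun T =>
            powersetSum S (fun j => (X (α.sum + j) : R12) - 1)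
              fun U => hprod (ofDescents α.sum T) * hprod (ofDescents β.sum U) := by
        simp only [powersetSum_comm (Dlist β), powersetSum_powersetSum]
    _ = _ := by
        refine sum_congr rfl fun S hS => ?_
        obtain ⟨hpos, hsum, hD⟩ := ofDescents_spec_of_subset hβ hβ0 (mem_powerset.1 hS)
        rw [HL_append_add_nearConcat hα hα0 hpos (ofDescents_ne_nil _ _), hD, hsum]
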